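/- If M(z) is an N×N multivariate para-unitary matrix whose entries are generating functions of arrays f_{i,j}: (ZMod p)^m → ZMod q, then any two distinct rows are mutually orthogonal complementary array sets: for all i ≠ i' and all shifts τ, Σ_{j=0}^{N-1} C_{f_{i,j}, f_{i',j}}(τ) = 0. -/

import Mathlib

/-! For `i ≠ i'` the `(i, i')` entry of `M(z) M†(z⁻¹)` is the Laurent polynomial
`∑_τ (∑_j C_{f i j, f i' j}(τ)) z^τ`, and para-unitarity says it vanishes on the whole torus
`(ℂˣ)^m`. Hence every coefficient vanishes: averaging `z^(-τ)` times the polynomial over the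
points `z = (ζ^t₁, …, ζ^tₘ)`, `ζ` a primitive `n`-th root of unity with `n` larger than all
exponent differences, isolates the coefficient of `z^τ` (discrete Fourier inversion). -/

open scoped BigOperators

noncomputable def omg (q : ℕ) : ℂ := Complex.exp (2 * Real.pi * Complex.I / q)

noncomputable def ec (q : ℕ) (a : ZMod q) : ℂ := omg q ^ a.val

/-- Aperiodic cross-correlation of arrays `(ZMod p)^m → ZMod q` at integer shift `τ`. -/
noncomputable def pcorr (q p m : ℕ) [NeZero p]
    (f1 f2 : (Fin m → ZMod p) → ZMod q) (τ : Fin m → ℤ) : ℂ :=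
  ∑ y : Fin m → ZMod p, ∑ y' : Fin m → ZMod p,
    if ∀ k, ((y k).val : ℤ) = ((y' k).val : ℤ) + τ k then ec q (f1 y - f2 y') else 0

noncomputable def genMat (q p m N : ℕ) [NeZero p]
    (f : Fin N → Fin N → (Fin m → ZMod p) → ZMod q) (z : Fin m → ℂ) :
    Matrix (Fin N) (Fin N) ℂ :=
  fun i j => ∑ y : Fin m → ZMod p, ec q (f i j y) * ∏ k, z k ^ (y k).val

noncomputable def genMatDag (q p m N : ℕ) [NeZero p]
    (f : Fin N → Fin N → (Fin m → ZMod p) → ZMod q) (z : Fin m → ℂ) :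
    Matrix (Fin N) (Fin N) ℂ :=
  fun i j => ∑ y : Fin m → ZMod p, ec q (-(f j i y)) * ∏ k, z k ^ (y k).val

-- `2πi / 0 = 0` in `ℂ`, so `ec 0` is identically `1`.
lemma omg_zero : omg 0 = 1 := by simp [omg]

lemma isPrimitiveRoot_omg {n : ℕ} (hn : n ≠ 0) : IsPrimitiveRoot (omg n) n :=
  Complex.isPrimitiveRoot_exp n hn

lemma ec_add (q : ℕ) (a b : ZMod q) : ec q (a + b) = ec q a * ec q b := by
  rcases Nat.eq_zero_or_pos q with rfl | hq
  · simp [ec, omg_zero]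
  · have : NeZero q := ⟨hq.ne'⟩
    rw [ec, ec, ec, ← pow_add, ZMod.val_add,
      ← pow_eq_pow_mod _ (isPrimitiveRoot_omg hq.ne').pow_eq_one]

section Laurent

variable {K ι : Type*} [Field K] {m : ℕ}

-- A Laurent polynomial given as a finite family of monomials `a x * z ^ e x` whose exponents may
-- repeat, so the coefficient of `z ^ τ` is a sum over the family.
def laurentEval (s : Finset ι) (a : ι → K) (e : ι → Fin m → ℤ) (z : Fin m → K) : K :=
  ∑ x ∈ s, a x * ∏ k, z k ^ e x k

def laurentCoeff (s : Finset ι) (a : ι → K) (e : ι → Fin m → ℤ) (τ : Fin m → ℤ) : K :=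
  ∑ x ∈ s with e x = τ, a x

namespace IsPrimitiveRoot

variable {ζ : K} {n : ℕ}

lemma sum_range_zpow_pow (hζ : IsPrimitiveRoot ζ n) (d : ℤ) :
    ∑ s ∈ Finset.range n, (ζ ^ d) ^ s = if (n : ℤ) ∣ d then (n : K) else 0 := by
  split_ifs with hd
  · simp [(hζ.zpow_eq_one_iff_dvd d).mpr hd]
  · have hne : ζ ^ d ≠ 1 := fun h => hd ((hζ.zpow_eq_one_iff_dvd d).mp h)
    have hpow : (ζ ^ d) ^ n = 1 := by
      rw [← zpow_natCast, ← zpow_mul, mul_comm, zpow_mul, zpow_natCast, hζ.pow_eq_one, one_zpow]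
    rw [geom_sum_eq hne, hpow, sub_self, zero_div]

lemma sum_pi_prod_zpow_pow (hζ : IsPrimitiveRoot ζ n) (d : Fin m → ℤ) (hd : ∀ k, |d k| < n) :
    ∑ t : Fin m → Fin n, ∏ k, (ζ ^ d k) ^ (t k : ℕ) = if d = 0 then (n : K) ^ m else 0 := by
  have hsingle : ∀ k, ∑ s : Fin n, (ζ ^ d k) ^ (s : ℕ) = if d k = 0 then (n : K) else 0 := by
    intro k
    rw [Fin.sum_univ_eq_sum_range (fun s => (ζ ^ d k) ^ s), hζ.sum_range_zpow_pow]
    exact if_congr ⟨fun h => Int.eq_zero_of_abs_lt_dvd h (hd k), fun h => h ▸ dvd_zero _⟩ rfl rfl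
  rw [← Fintype.prod_sum fun k (s : Fin n) => (ζ ^ d k) ^ (s : ℕ)]
  simp only [hsingle, Fintype.prod_ite_zero, funext_iff, Pi.zero_apply, Finset.prod_const,
    Finset.card_univ, Fintype.card_fin]

lemma sum_pi_mul_laurentEval (hζ : IsPrimitiveRoot ζ n) (hn : n ≠ 0) (s : Finset ι) (a : ι → K)
    (e : ι → Fin m → ℤ) (τ : Fin m → ℤ) (he : ∀ x ∈ s, ∀ k, |e x k - τ k| < n) :
    ∑ t : Fin m → Fin n, (∏ k, (ζ ^ (t k : ℕ)) ^ (-τ k)) *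
        laurentEval s a e (fun k => ζ ^ (t k : ℕ)) = (n : K) ^ m * laurentCoeff s a e τ := by
  have hζ0 : ζ ≠ 0 := hζ.ne_zero hn
  have hterm : ∀ (t : Fin m → Fin n) x k,
      (ζ ^ (t k : ℕ)) ^ (-τ k) * (ζ ^ (t k : ℕ)) ^ e x k = (ζ ^ (e x k - τ k)) ^ (t k : ℕ) := by
    intro t x k
    rw [← zpow_add₀ (pow_ne_zero _ hζ0), ← zpow_natCast, ← zpow_natCast, ← zpow_mul, ← zpow_mul]
    ring_nf
  calc ∑ t : Fin m → Fin n, (∏ k, (ζ ^ (t k : ℕ)) ^ (-τ k)) *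
        laurentEval s a e (fun k => ζ ^ (t k : ℕ))
      = ∑ x ∈ s, a x * ∑ t : Fin m → Fin n, ∏ k, (ζ ^ (e x k - τ k)) ^ (t k : ℕ) := by
        simp only [laurentEval, Finset.mul_sum, ← hterm, Finset.prod_mul_distrib]
        rw [Finset.sum_comm]
        refine Finset.sum_congr rfl fun x _ => Finset.sum_congr rfl fun t _ => ?_
        ring
    _ = ∑ x ∈ s, a x * if e x - τ = 0 then (n : K) ^ m else 0 :=
        Finset.sum_congr rfl fun x hx => by rw [hζ.sum_pi_prod_zpow_pow _ (he x hx)]; rfl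
    _ = (n : K) ^ m * laurentCoeff s a e τ := by
        simp only [laurentCoeff, sub_eq_zero, mul_ite, mul_zero, Finset.sum_filter, Finset.mul_sum,
          mul_comm]

end IsPrimitiveRoot

lemma laurentCoeff_eq_zero_of_laurentEval_eq_zero (s : Finset ι) (a : ι → ℂ) (e : ι → Fin m → ℤ)
    (h : ∀ z : Fin m → ℂ, (∀ k, z k ≠ 0) → laurentEval s a e z = 0) (τ : Fin m → ℤ) :
    laurentCoeff s a e τ = 0 := by
  set n := s.sup (fun x => Finset.univ.sup fun k => (e x k - τ k).natAbs) + 1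
  have hn : n ≠ 0 := Nat.succ_ne_zero _
  have he : ∀ x ∈ s, ∀ k, |e x k - τ k| < n := by
    intro x hx k
    rw [Int.abs_eq_natAbs, Nat.cast_lt, Nat.lt_succ_iff]
    exact (Finset.le_sup (f := fun k => (e x k - τ k).natAbs) (Finset.mem_univ k)).trans
      (Finset.le_sup (f := fun x => Finset.univ.sup fun k => (e x k - τ k).natAbs) hx)
  have hζ := Complex.isPrimitiveRoot_exp n hn
  have hsum := hζ.sum_pi_mul_laurentEval hn s a e τ he
  simp only [h _ fun k => pow_ne_zero _ (hζ.ne_zero hn), mul_zero, Finset.sum_const_zero] at hsum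
  exact (mul_eq_zero.mp hsum.symm).resolve_left (pow_ne_zero _ (Nat.cast_ne_zero.mpr hn))

end Laurent

section GenMat

variable {q p m N : ℕ}

noncomputable def rowPairTerm (f : Fin N → Fin N → (Fin m → ZMod p) → ZMod q) (i i' : Fin N)
    (x : Fin N × (Fin m → ZMod p) × (Fin m → ZMod p)) : ℂ :=
  ec q (f i x.1 x.2.1 - f i' x.1 x.2.2)

def lagExponent (x : Fin N × (Fin m → ZMod p) × (Fin m → ZMod p)) (k : Fin m) : ℤ :=
  (x.2.1 k).val - (x.2.2 k).val

variable [NeZero p] (f : Fin N → Fin N → (Fin m → ZMod p) → ZMod q)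

lemma genMat_mul_genMatDag_inv_apply (z : Fin m → ℂ) (hz : ∀ k, z k ≠ 0) (i i' : Fin N) :
    (genMat q p m N f z * genMatDag q p m N f (fun k => (z k)⁻¹)) i i' =
      laurentEval Finset.univ (rowPairTerm f i i') lagExponent z := by
  simp only [Matrix.mul_apply, genMat, genMatDag, laurentEval, Fintype.sum_prod_type,
    Finset.sum_mul_sum]
  refine Finset.sum_congr rfl fun j _ => Finset.sum_congr rfl fun y _ =>
    Finset.sum_congr rfl fun y' _ => ?_
  have hmonomial : (∏ k, z k ^ (y k).val) * ∏ k, (z k)⁻¹ ^ (y' k).val =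
      ∏ k, z k ^ lagExponent (j, y, y') k := by
    rw [← Finset.prod_mul_distrib]
    refine Finset.prod_congr rfl fun k _ => ?_
    rw [lagExponent, zpow_sub₀ (hz k), zpow_natCast, zpow_natCast, inv_pow, div_eq_mul_inv]
  rw [rowPairTerm, sub_eq_add_neg, ec_add, ← hmonomial]
  ring

lemma sum_pcorr_eq_laurentCoeff (i i' : Fin N) (τ : Fin m → ℤ) :
    ∑ j, pcorr q p m (f i j) (f i' j) τ =
      laurentCoeff Finset.univ (rowPairTerm f i i') lagExponent τ := by
  simp only [pcorr, laurentCoeff, Finset.sum_filter, Fintype.sum_prod_type, funext_iff,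
    lagExponent, sub_eq_iff_eq_add', rowPairTerm]

end GenMat

theorem stmt6_general (q p m N : ℕ) [NeZero p]
    (f : Fin N → Fin N → (Fin m → ZMod p) → ZMod q) (c : ℝ)
    (hPU : ∀ z : Fin m → ℂ, (∀ k, z k ≠ 0) →
      genMat q p m N f z * genMatDag q p m N f (fun k => (z k)⁻¹) =
        (c : ℂ) • (1 : Matrix (Fin N) (Fin N) ℂ)) :
    ∀ i i' : Fin N, i ≠ i' → ∀ τ : Fin m → ℤ,
      ∑ j : Fin N, pcorr q p m (f i j) (f i' j) τ = 0 := by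
  intro i i' hne τ
  rw [sum_pcorr_eq_laurentCoeff]
  refine laurentCoeff_eq_zero_of_laurentEval_eq_zero _ _ _ (fun z hz => ?_) τ
  rw [← genMat_mul_genMatDag_inv_apply f z hz, hPU z hz, Matrix.smul_apply,
    Matrix.one_apply_ne hne, smul_zero]

/-- If the generating matrix of `f` is para-unitary, any two distinct rows are
mutually orthogonal complementary array sets. -/
theorem stmt6 (q p m N : ℕ) [NeZero p] (hq : 0 < q)
    (f : Fin N → Fin N → (Fin m → ZMod p) → ZMod q) (c : ℝ)
    (hPU : ∀ z : Fin m → ℂ, (∀ k, z k ≠ 0) →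
      genMat q p m N f z * genMatDag q p m N f (fun k => (z k)⁻¹) =
        (c : ℂ) • (1 : Matrix (Fin N) (Fin N) ℂ)) :
    ∀ i i' : Fin N, i ≠ i' → ∀ τ : Fin m → ℤ,
      ∑ j : Fin N, pcorr q p m (f i j) (f i' j) τ = 0 :=
  stmt6_general q p m N f c hPU
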